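/- With A = (a_{ij}) ∈ ℝ^{d×d} antisymmetric and R = (r_{ij}) ∈ ℝ^{k×d}, the balanced operator P^bal(w_a, w_r) = (skew((4α−1)w_a A + √α Rᵀ w_r), α w_r A − √α R w_a) on ℝ^{d×d} × ℝ^{k×d}, viewed as a linear operator on ℝ^{(d+k)d} via the standard entrywise basis, has 1-norm (maximum over basis vectors of the entrywise 1-norm of the image) bounded by max(n_A, n_R), where n_A = max_j (√α Σ_{i=1}^k |r_{ij}| + |4α−1|·‖A‖₁) and n_R = max_j (α Σ_i |a_{ij}| + √α ‖R‖_∞); here ‖A‖₁ is the maximum column sum of absolute entries and ‖R‖_∞ the maximum row sum of absolute entries. -/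

import Mathlib

open Matrix

/-- The skew part of a square matrix, `(M − Mᵀ)/2`. -/
noncomputable def mskew {d : ℕ} (M : Matrix (Fin d) (Fin d) ℝ) :
    Matrix (Fin d) (Fin d) ℝ := (1/2 : ℝ) • (M - Mᵀ)

/-- The balanced Stiefel transport operator
`P^bal(w_a, w_r) = (skew((4α−1)w_a A + √α Rᵀ w_r), α w_r A − √α R w_a)`. -/
noncomputable def stiefelPbal {d k : ℕ} (α : ℝ) (A : Matrix (Fin d) (Fin d) ℝ)
    (R : Matrix (Fin k) (Fin d) ℝ)
    (w : Matrix (Fin d) (Fin d) ℝ × Matrix (Fin k) (Fin d) ℝ) :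
    Matrix (Fin d) (Fin d) ℝ × Matrix (Fin k) (Fin d) ℝ :=
  (mskew ((4 * α - 1) • (w.1 * A) + Real.sqrt α • (Rᵀ * w.2)),
    α • (w.2 * A) - Real.sqrt α • (R * w.1))

/-- The entrywise 1-norm of a pair of matrices. -/
noncomputable def pairOneNorm {d k : ℕ}
    (w : Matrix (Fin d) (Fin d) ℝ × Matrix (Fin k) (Fin d) ℝ) : ℝ :=
  (∑ i, ∑ j, |w.1 i j|) + ∑ i, ∑ j, |w.2 i j|

/-!
On a basis vector `e_{ij}`, `P^bal` only involves the matrices `e_{ij} A` (row `j` of `A`),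
`R e_{ij}` (column `i` of `R`) and `Rᵀ e_{ij}` (row `i` of `R`), and the skew projection does not
increase the entrywise 1-norm by the triangle inequality. So the 1-norm of each image is a
weighted sum of one row or column sum of `|A|` and one of `|R|`. Antisymmetry of `A` turns its
row sums into column sums, and each sum is bounded by the corresponding maximum.
-/

namespace Matrix

variable {l m n : Type*} [Fintype l] [Fintype m] [Fintype n]

def entrywiseL1 (M : Matrix m n ℝ) : ℝ :=
  ∑ i, ∑ j, |M i j|

lemma entrywiseL1_add_le (M N : Matrix m n ℝ) :
    entrywiseL1 (M + N) ≤ entrywiseL1 M + entrywiseL1 N := by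
  simp only [entrywiseL1, ← Finset.sum_add_distrib]
  gcongr with i _ j _
  exact abs_add_le _ _

lemma entrywiseL1_smul (c : ℝ) (M : Matrix m n ℝ) :
    entrywiseL1 (c • M) = |c| * entrywiseL1 M := by
  simp [entrywiseL1, Finset.mul_sum, abs_mul]

@[simp]
lemma entrywiseL1_neg (M : Matrix m n ℝ) : entrywiseL1 (-M) = entrywiseL1 M := by
  simp [entrywiseL1]

@[simp]
lemma entrywiseL1_transpose (M : Matrix m n ℝ) : entrywiseL1 Mᵀ = entrywiseL1 M := by
  simp only [entrywiseL1, transpose_apply]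
  exact Finset.sum_comm

lemma entrywiseL1_single_mul [DecidableEq l] [DecidableEq m] (i : l) (j : m) (c : ℝ)
    (M : Matrix m n ℝ) : entrywiseL1 (single i j c * M) = |c| * ∑ b, |M j b| := by
  rw [entrywiseL1, Finset.sum_eq_single i (fun a _ ha => by simp [ha]) (by simp)]
  simp [abs_mul, Finset.mul_sum]

lemma entrywiseL1_mul_single [DecidableEq m] [DecidableEq n] (M : Matrix l m ℝ) (i : m) (j : n)
    (c : ℝ) : entrywiseL1 (M * single i j c) = |c| * ∑ a, |M a i| := by
  simp only [entrywiseL1, Finset.mul_sum]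
  refine Finset.sum_congr rfl fun a _ => ?_
  rw [Finset.sum_eq_single j (fun b _ hb => by simp [hb]) (by simp)]
  simp [abs_mul, mul_comm]

lemma sum_abs_row_eq_sum_abs_col_of_transpose_eq_neg {A : Matrix n n ℝ} (hA : Aᵀ = -A) (j : n) :
    ∑ q, |A j q| = ∑ q, |A q j| := by
  refine Finset.sum_congr rfl fun q _ => ?_
  rw [← abs_neg, ← neg_apply, ← hA, transpose_apply]

end Matrix

lemma entrywiseL1_mskew_le {d : ℕ} (M : Matrix (Fin d) (Fin d) ℝ) :
    entrywiseL1 (mskew M) ≤ entrywiseL1 M := by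
  rw [mskew, entrywiseL1_smul, abs_of_pos one_half_pos, sub_eq_add_neg]
  calc 1 / 2 * entrywiseL1 (M + -Mᵀ) ≤ 1 / 2 * (entrywiseL1 M + entrywiseL1 (-Mᵀ)) := by
        gcongr; exact entrywiseL1_add_le _ _
    _ = entrywiseL1 M := by rw [entrywiseL1_neg, entrywiseL1_transpose]; ring

lemma pairOneNorm_eq {d k : ℕ} (w : Matrix (Fin d) (Fin d) ℝ × Matrix (Fin k) (Fin d) ℝ) :
    pairOneNorm w = entrywiseL1 w.1 + entrywiseL1 w.2 :=
  rfl

section Pbal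

variable {d k : ℕ} (α : ℝ) (A : Matrix (Fin d) (Fin d) ℝ) (R : Matrix (Fin k) (Fin d) ℝ)

lemma pairOneNorm_stiefelPbal_single_fst_le (i j : Fin d) :
    pairOneNorm (stiefelPbal α A R (single i j 1, 0)) ≤
      Real.sqrt α * ∑ p, |R p i| + |4 * α - 1| * ∑ q, |A j q| := by
  have hskew := entrywiseL1_mskew_le ((4 * α - 1) • (single i j (1 : ℝ) * A))
  simp only [pairOneNorm_eq, stiefelPbal, Matrix.mul_zero, smul_zero, add_zero, Matrix.zero_mul,
    zero_sub, entrywiseL1_neg, entrywiseL1_smul, entrywiseL1_single_mul,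
    entrywiseL1_mul_single, abs_one, one_mul, abs_of_nonneg (Real.sqrt_nonneg α)] at hskew ⊢
  linarith

lemma pairOneNorm_stiefelPbal_single_snd_le (i : Fin k) (j : Fin d) :
    pairOneNorm (stiefelPbal α A R (0, single i j 1)) ≤
      Real.sqrt α * ∑ q, |R i q| + |α| * ∑ q, |A j q| := by
  have hskew := entrywiseL1_mskew_le (Real.sqrt α • (Rᵀ * single i j (1 : ℝ)))
  simp only [pairOneNorm_eq, stiefelPbal, Matrix.mul_zero, smul_zero, zero_add, Matrix.zero_mul,
    sub_zero, entrywiseL1_smul, entrywiseL1_single_mul, entrywiseL1_mul_single, abs_one,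
    one_mul, transpose_apply, abs_of_nonneg (Real.sqrt_nonneg α)] at hskew ⊢
  linarith

end Pbal

/-- The 1-norm of `P^bal` with respect to the standard entrywise basis is bounded by
`max(n_A, n_R)` with `n_A = max_j(√α Σᵢ |r_{ij}| + |4α−1|‖A‖₁)` and
`n_R = max_j(α Σᵢ |a_{ij}| + √α ‖R‖_∞)`. -/
theorem stiefelPbal_one_norm_bound (d k : ℕ) (α : ℝ) (hα : 0 < α)
    (A : Matrix (Fin d) (Fin d) ℝ) (hA : Aᵀ = -A)
    (R : Matrix (Fin k) (Fin d) ℝ)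
    (normA1 nA nR : ℝ)
    (hnormA1 : normA1 = ⨆ j : Fin d, ∑ i : Fin d, |A i j|)
    (hnA : nA = ⨆ j : Fin d,
      (Real.sqrt α * ∑ i : Fin k, |R i j| + |4 * α - 1| * normA1))
    (hnR : nR = ⨆ j : Fin d,
      (α * ∑ i : Fin d, |A i j| + Real.sqrt α * (⨆ i : Fin k, ∑ j' : Fin d, |R i j'|))) :
    (∀ (i : Fin d) (j : Fin d),
        pairOneNorm (stiefelPbal α A R (single i j (1:ℝ), 0)) ≤ max nA nR) ∧
      (∀ (i : Fin k) (j : Fin d),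
        pairOneNorm (stiefelPbal α A R (0, single i j (1:ℝ))) ≤ max nA nR) := by
  have hrow := sum_abs_row_eq_sum_abs_col_of_transpose_eq_neg hA
  subst hnormA1
  refine ⟨fun i j => ?_, fun i j => ?_⟩
  · calc _ ≤ Real.sqrt α * ∑ p, |R p i| + |4 * α - 1| * ∑ q, |A q j| := by
          rw [← hrow]; exact pairOneNorm_stiefelPbal_single_fst_le α A R i j
      _ ≤ Real.sqrt α * ∑ p, |R p i| + |4 * α - 1| * ⨆ j, ∑ q, |A q j| := by
          gcongr; apply le_ciSup (Finite.bddAbove_range _) j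
      _ ≤ nA := hnA ▸ le_ciSup_of_le (Finite.bddAbove_range _) i le_rfl
      _ ≤ _ := le_max_left _ _
  · calc _ ≤ Real.sqrt α * ∑ q, |R i q| + |α| * ∑ q, |A j q| :=
          pairOneNorm_stiefelPbal_single_snd_le α A R i j
      _ ≤ α * ∑ q, |A q j| + Real.sqrt α * ⨆ i, ∑ q, |R i q| := by
          rw [abs_of_pos hα, hrow, add_comm]
          gcongr; apply le_ciSup (Finite.bddAbove_range _) i
      _ ≤ nR := hnR ▸ le_ciSup_of_le (Finite.bddAbove_range _) j le_rfl
      _ ≤ _ := le_max_right _ _
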